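/- Let G be a metric group, μ a finitely additive regular probability measure on G, K ⊆ G compact, and t_n → 1 a null sequence. If liminf_n μ(K t_n) > 0, then there exists m ∈ ℕ such that μ(K ∩ K t_n) > liminf_k μ(K t_k)/4 > 0 for all n > m; in particular t_n ∈ K⁻¹K for all n > m. -/

import Mathlib

open Set Filter Topology Pointwise

/-!
Outer regularity gives an open `U ⊇ K` with `μ U < μ K + L/4`, where `L` is the liminf. Since
`t n → 1`, compactness of `K` puts `K t_n` inside `U` for large `n`, and then inclusion–exclusion
gives `μ (K ∩ K t_n) = μ K + μ (K t_n) - μ (K ∪ K t_n) > μ K + L/2 - μ U > L/4`. A point of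
`K ∩ K t_n`, say `k' = k t_n`, exhibits `t_n = k⁻¹ k'`.
-/

section FinitelyAdditive

variable {α : Type*} {μ : Set α → ℝ}

theorem empty_eq_zero_of_additive
    (hadd : ∀ A B : Set α, Disjoint A B → μ (A ∪ B) = μ A + μ B) : μ ∅ = 0 := by
  have h := hadd ∅ ∅ disjoint_bot_left
  rw [union_self] at h
  linarith

theorem nonneg_of_monotone_of_additive (hmono : ∀ A B : Set α, A ⊆ B → μ A ≤ μ B)
    (hadd : ∀ A B : Set α, Disjoint A B → μ (A ∪ B) = μ A + μ B) (A : Set α) : 0 ≤ μ A :=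
  empty_eq_zero_of_additive hadd ▸ hmono ∅ A (empty_subset A)

theorem nonempty_of_pos_of_additive
    (hadd : ∀ A B : Set α, Disjoint A B → μ (A ∪ B) = μ A + μ B) {A : Set α} (hA : 0 < μ A) :
    A.Nonempty :=
  nonempty_iff_ne_empty.2 fun h => by
    rw [h, empty_eq_zero_of_additive hadd] at hA
    exact lt_irrefl 0 hA

theorem union_add_inter_of_additive
    (hadd : ∀ A B : Set α, Disjoint A B → μ (A ∪ B) = μ A + μ B) (A B : Set α) :
    μ (A ∪ B) + μ (A ∩ B) = μ A + μ B := by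
  have hunion : μ (A ∪ B) = μ A + μ (B \ A) := by
    rw [← union_sdiff_self]
    exact hadd A (B \ A) disjoint_sdiff_right
  have hsplit : μ B = μ (A ∩ B) + μ (B \ A) := by
    rw [← hadd _ _ (disjoint_sdiff_right.mono_left inter_subset_left), inter_comm,
      inter_union_sdiff]
  linarith

end FinitelyAdditive

theorem mem_inv_mul_of_inter_mul_singleton_nonempty {G : Type*} [Group G] {K : Set G} {t : G}
    (h : (K ∩ (K * {t})).Nonempty) : t ∈ K⁻¹ * K := by
  obtain ⟨x, hxK, a, ha, b, rfl, rfl⟩ := h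
  exact ⟨a⁻¹, inv_mem_inv.2 ha, a * b, hxK, inv_mul_cancel_left a b⟩

theorem eventually_mul_singleton_subset {G ι : Type*} [Group G] [TopologicalSpace G]
    [IsTopologicalGroup G] {K U : Set G} (hK : IsCompact K) (hU : IsOpen U) (hKU : K ⊆ U)
    {l : Filter ι} {t : ι → G} (ht : Tendsto t l (𝓝 1)) : ∀ᶠ n in l, K * {t n} ⊆ U := by
  obtain ⟨V, hV, hKV⟩ := compact_open_separated_mul_right hK hU hKU
  exact (ht.eventually_mem hV).mono fun n hn =>
    (mul_subset_mul_left (singleton_subset_iff.2 hn)).trans hKV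

theorem selective_subcontinuity_sequence_general
    {G : Type*} [Group G] [MetricSpace G] [IsTopologicalGroup G]
    (μ : Set G → ℝ)
    (hmono : ∀ A B : Set G, A ⊆ B → μ A ≤ μ B)
    (hadd : ∀ A B : Set G, Disjoint A B → μ (A ∪ B) = μ A + μ B)
    (houter : ∀ C : Set G, IsCompact C → ∀ ε > (0 : ℝ),
      ∃ U : Set G, IsOpen U ∧ C ⊆ U ∧ μ U < μ C + ε)
    (K : Set G) (hK : IsCompact K)
    (t : ℕ → G) (ht : Tendsto t atTop (𝓝 1))
    (hL : 0 < Filter.liminf (fun n => μ (K * {t n})) atTop) :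
    0 < Filter.liminf (fun n => μ (K * {t n})) atTop / 4 ∧
      ∃ m : ℕ, ∀ n > m,
        Filter.liminf (fun k => μ (K * {t k})) atTop / 4 < μ (K ∩ K * {t n}) ∧
        t n ∈ K⁻¹ * K := by
  set L := liminf (fun n => μ (K * {t n})) atTop
  obtain ⟨U, hUopen, hKU, hUμ⟩ := houter K hK (L / 4) (by linarith)
  have hlarge : ∀ᶠ n in atTop, L / 2 < μ (K * {t n}) :=
    eventually_lt_of_lt_liminf (by linarith) (isBoundedUnder_of_eventually_ge
      (.of_forall fun n => nonneg_of_monotone_of_additive hmono hadd _))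
  obtain ⟨m, hm⟩ :=
    eventually_atTop.1 (hlarge.and (eventually_mul_singleton_subset hK hUopen hKU ht))
  refine ⟨by linarith, m, fun n hn => ?_⟩
  obtain ⟨hμn, hsub⟩ := hm n hn.le
  have hinter : L / 4 < μ (K ∩ (K * {t n})) := by
    have := union_add_inter_of_additive hadd K (K * {t n})
    have := hmono _ _ (union_subset hKU hsub)
    linarith
  -- `∩` and `*` share precedence 70, so the first conjunct reads `μ ((K ∩ K) * {t n})`.
  refine ⟨by rw [inter_self]; linarith, ?_⟩
  exact mem_inv_mul_of_inter_mul_singleton_nonempty (nonempty_of_pos_of_additive hadd (by linarith))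

/-- Lemma 1′: if `liminf μ(K t_n) > 0` along a null sequence `t`, then
eventually `μ(K ∩ K t_n) > liminf μ(K t_k)/4 > 0`, so `t_n ∈ K⁻¹K`. -/
theorem selective_subcontinuity_sequence
    {G : Type*} [Group G] [MetricSpace G] [IsTopologicalGroup G]
    (hinv : ∀ g x y : G, dist (g * x) (g * y) = dist x y)
    (μ : Set G → ℝ)
    (hmono : ∀ A B : Set G, A ⊆ B → μ A ≤ μ B)
    (hadd : ∀ A B : Set G, Disjoint A B → μ (A ∪ B) = μ A + μ B)
    (hnn : ∀ A : Set G, 0 ≤ μ A) (hprob : μ Set.univ = 1)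
    (houter : ∀ C : Set G, IsCompact C → ∀ ε > (0 : ℝ),
      ∃ U : Set G, IsOpen U ∧ C ⊆ U ∧ μ U < μ C + ε)
    (K : Set G) (hK : IsCompact K)
    (t : ℕ → G) (ht : Tendsto t atTop (𝓝 1))
    (hL : 0 < Filter.liminf (fun n => μ (K * {t n})) atTop) :
    0 < Filter.liminf (fun n => μ (K * {t n})) atTop / 4 ∧
      ∃ m : ℕ, ∀ n > m,
        Filter.liminf (fun k => μ (K * {t k})) atTop / 4 < μ (K ∩ K * {t n}) ∧
        t n ∈ K⁻¹ * K :=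
  selective_subcontinuity_sequence_general μ hmono hadd houter K hK t ht hL
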